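/- The Masur–Veech polynomial V Ω^{MV}_{1,1}(L₁) = π²/12 + L₁²/48; in particular MV_{1,1} = 8·V Ω^{MV}_{1,1}(0) = 2π²/3. -/

import Mathlib

/-!
Expanding `t / (eᵗ - 1) = ∑_{n ≥ 1} t e^{-nt}` and integrating term by term (`∫₀^∞ t e^{-nt} dt
= 1/n²`, a Gamma integral) gives `∫₀^∞ t / (eᵗ - 1) dt = ζ(2) = π²/6`; the loop graph thus
contributes `π²/12`.
-/

open MeasureTheory Real

noncomputable section

/-- The Kontsevich volume `VΩ^K_{0,3} = 1`. -/
def VOmegaK03 (_ _ _ : ℝ) : ℝ := 1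

/-- The Masur–Veech polynomial `VΩ^{MV}_{1,1}`: the sum over the stable graphs of type
`(1,1)` — the one-vertex genus-one graph, contributing `VΩ^K_{1,1}(L₁) = L₁²/48`, and the
graph with one genus-zero vertex and a loop (automorphism group of order `2`),
contributing `(1/2)∫₀^∞ VΩ^K_{0,3}(ℓ,ℓ,L₁)·ℓ dℓ/(e^ℓ−1)`. -/
def VOmegaMV11 (L : ℝ) : ℝ :=
  L ^ 2 / 48 +
    (1 / 2) * ∫ ℓ in Set.Ioi (0 : ℝ), VOmegaK03 ℓ ℓ L * (ℓ / (Real.exp ℓ - 1))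

open Set

lemma integral_mul_exp_neg_mul_Ioi {a : ℝ} (ha : 0 < a) :
    ∫ t in Ioi (0 : ℝ), t * exp (-(a * t)) = 1 / a ^ 2 := by
  have h := integral_rpow_mul_exp_neg_mul_Ioi two_pos ha
  norm_num only [Gamma_two, div_pow, rpow_one] at h
  simpa using h

lemma integrableOn_mul_exp_neg_mul_Ioi {a : ℝ} (ha : 0 < a) :
    IntegrableOn (fun t ↦ t * exp (-(a * t))) (Ioi 0) :=
  .of_integral_ne_zero (by rw [integral_mul_exp_neg_mul_Ioi ha]; positivity)

lemma hasSum_mul_exp_neg_mul {t : ℝ} (ht : 0 < t) :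
    HasSum (fun n : ℕ ↦ t * exp (-((n + 1) * t))) (t / (exp t - 1)) := by
  have hr : exp (-t) < 1 := exp_lt_one_iff.mpr (neg_lt_zero.mpr ht)
  have hgeom := (hasSum_geometric_of_lt_one (exp_pos (-t)).le hr).mul_left (t * exp (-t))
  have hval : t / (exp t - 1) = t * exp (-t) * (1 - exp (-t))⁻¹ := by
    have : exp t - 1 ≠ 0 := sub_ne_zero.mpr (one_lt_exp_iff.mpr ht).ne'
    rw [exp_neg]
    field_simp
  rw [hval]
  refine hgeom.congr_fun fun n ↦ ?_
  rw [mul_assoc, ← exp_nat_mul, ← exp_add]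
  ring_nf

lemma hasSum_one_div_nat_add_one_sq :
    HasSum (fun n : ℕ ↦ 1 / ((n : ℝ) + 1) ^ 2) (π ^ 2 / 6) := by
  have h := (hasSum_nat_add_iff (f := fun n : ℕ ↦ 1 / (n : ℝ) ^ 2) 1).mpr
    (by simpa using hasSum_zeta_two)
  simpa only [Nat.cast_add, Nat.cast_one] using h

theorem integral_div_exp_sub_one_Ioi :
    ∫ t in Ioi (0 : ℝ), t / (exp t - 1) = π ^ 2 / 6 := by
  set F : ℕ → ℝ → ℝ := fun n t ↦ t * exp (-((n + 1) * t))
  have hF_int (n : ℕ) : ∫ t in Ioi (0 : ℝ), F n t = 1 / ((n : ℝ) + 1) ^ 2 :=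
    integral_mul_exp_neg_mul_Ioi (by positivity)
  have hF_norm (n : ℕ) : ∫ t in Ioi (0 : ℝ), ‖F n t‖ = ∫ t in Ioi (0 : ℝ), F n t :=
    setIntegral_congr_fun measurableSet_Ioi fun t (ht : 0 < t) ↦
      norm_of_nonneg (by positivity)
  have hsum := hasSum_integral_of_summable_integral_norm (F := F)
    (fun n ↦ integrableOn_mul_exp_neg_mul_Ioi (a := (n : ℝ) + 1) (by positivity))
    (by simpa only [hF_norm, hF_int] using hasSum_one_div_nat_add_one_sq.summable)
  simp only [hF_int] at hsum
  rw [hasSum_one_div_nat_add_one_sq.unique hsum]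
  exact setIntegral_congr_fun measurableSet_Ioi fun t ht ↦
    (hasSum_mul_exp_neg_mul ht).tsum_eq.symm

/-- `VΩ^{MV}_{1,1}(L₁) = π²/12 + L₁²/48`; in particular
`MV_{1,1} = 8·VΩ^{MV}_{1,1}(0) = 2π²/3`. -/
theorem VOmegaMV11_eq :
    (∀ L : ℝ, VOmegaMV11 L = π ^ 2 / 12 + L ^ 2 / 48) ∧
      8 * VOmegaMV11 0 = 2 * π ^ 2 / 3 := by
  have h (L : ℝ) : VOmegaMV11 L = π ^ 2 / 12 + L ^ 2 / 48 := by
    simp only [VOmegaMV11, VOmegaK03, one_mul, integral_div_exp_sub_one_Ioi]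
    ring
  exact ⟨h, by rw [h 0]; ring⟩

end
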